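/- (Breiman's lemma under dependence.) Let X be a real-valued random variable with distribution F ∈ ℛ_{−α} for some 0<α<∞, and let Θ be a non-negative random variable, non-degenerate at zero, with distribution G, such that Assumption A3' holds with function h, \bar G(cx) = o(P[ΘX>x]) as x→∞ for every constant c>0, and E[Θ^ρ h(Θ)] < ∞ for some ρ>α. Then P[ΘX>x] ~ E[Θ^α h(Θ)]·\bar F(x) as x→∞, and consequently the distribution H of ΘX belongs to ℛ_{−α}. -/

import Mathlib

open MeasureTheory ProbabilityTheory Filter Topology Set

noncomputable section

namespace RWS

variable {Ω : Type} [MeasurableSpace Ω]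

/-- The probability of an event, as a real number. -/
def pr (μ : Measure Ω) (s : Set Ω) : ℝ := (μ s).toReal

/-- The tail function `x ↦ P[X > x]` of a real-valued random variable `X`. -/
def tail (μ : Measure Ω) (X : Ω → ℝ) (x : ℝ) : ℝ := pr μ {ω | X ω > x}

/-- The support of (the distribution of) a real-valued random variable. -/
def supp (μ : Measure Ω) (Θ : Ω → ℝ) : Set ℝ :=
  {θ : ℝ | ∀ δ > 0, 0 < μ {ω | Θ ω ∈ Icc (θ - δ) (θ + δ)}}

/-- `Θ` is non-degenerate at zero. -/
def NonDegAtZero (μ : Measure Ω) (Θ : Ω → ℝ) : Prop := 0 < μ {ω | Θ ω ≠ 0}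

/-- `c` is the conditional probability of the event `A` given `Θ = θ`, defined as the limit
as `δ ↓ 0` of the probability of `A` conditioned on `Θ ∈ [θ-δ, θ+δ]`. -/
def IsCondProb (μ : Measure Ω) (Θ : Ω → ℝ) (A : Set Ω) (θ c : ℝ) : Prop :=
  Tendsto (fun δ : ℝ =>
      pr μ (A ∩ {ω | Θ ω ∈ Icc (θ - δ) (θ + δ)}) / pr μ {ω | Θ ω ∈ Icc (θ - δ) (θ + δ)})
    (nhdsWithin 0 (Ioi 0)) (nhds c)

/-- `c` is the conditional probability of `A` given `Θi = θi, Θj = θj`, defined as the limit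
as `δ ↓ 0` of the probability of `A` conditioned on `Θi ∈ [θi-δ, θi+δ], Θj ∈ [θj-δ, θj+δ]`. -/
def IsCondProb2 (μ : Measure Ω) (Θi Θj : Ω → ℝ) (A : Set Ω) (θi θj c : ℝ) : Prop :=
  Tendsto (fun δ : ℝ =>
      pr μ (A ∩ {ω | Θi ω ∈ Icc (θi - δ) (θi + δ) ∧ Θj ω ∈ Icc (θj - δ) (θj + δ)}) /
        pr μ {ω | Θi ω ∈ Icc (θi - δ) (θi + δ) ∧ Θj ω ∈ Icc (θj - δ) (θj + δ)})
    (nhdsWithin 0 (Ioi 0)) (nhds c)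

/-- The distribution of `X` under `μ` has a dominatedly varying tail (class `𝒟`). -/
def DomVar (μ : Measure Ω) (X : Ω → ℝ) : Prop :=
  ∀ b ∈ Ioo (0:ℝ) 1,
    IsBoundedUnder (· ≤ ·) atTop (fun x => tail μ X (b * x) / tail μ X x)

/-- The distribution of `X` under `μ` is long-tailed (class `ℒ`). -/
def LongTail (μ : Measure Ω) (X : Ω → ℝ) : Prop :=
  ∀ a > (0:ℝ), Tendsto (fun x => tail μ X (x - a) / tail μ X x) atTop (nhds 1)

/-- The distribution of `X` under `μ` is consistently varying (class `𝒞`). -/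
def ConsVar (μ : Measure Ω) (X : Ω → ℝ) : Prop :=
  Tendsto (fun v : ℝ => limsup (fun x => tail μ X (v * x) / tail μ X x) atTop)
    (nhdsWithin 1 (Iio 1)) (nhds 1)

/-- The distribution of `X` under `μ` is regularly varying with index `-α` (class `ℛ₋α`). -/
def RegVar (μ : Measure Ω) (X : Ω → ℝ) (α : ℝ) : Prop :=
  ∀ b > (0:ℝ), Tendsto (fun x => tail μ X (b * x) / tail μ X x) atTop (nhds (b ^ (-α)))

/-- The `L`-index `L_F = lim_{v↓1} liminf_{x→∞} F̄(vx)/F̄(x)` of the distribution of `X`. -/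
def Lindex (μ : Measure Ω) (X : Ω → ℝ) : ℝ :=
  limUnder (nhdsWithin 1 (Ioi 1))
    (fun v => liminf (fun x => tail μ X (v * x) / tail μ X x) atTop)

/-- `Xi` and `Xj` are tail asymptotically independent:
`P[|Xi| > xi | Xj > xj] → 0` as `xi ∧ xj → ∞`. -/
def TAIpair (μ : Measure Ω) (Xi Xj : Ω → ℝ) : Prop :=
  Tendsto (fun p : ℝ × ℝ =>
      pr μ {ω | |Xi ω| > p.1 ∧ Xj ω > p.2} / pr μ {ω | Xj ω > p.2})
    (atTop ×ˢ atTop) (nhds 0)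

/-- `Xi` and `Xj` are quasi-asymptotically independent. -/
def QAIpair (μ : Measure Ω) (Xi Xj : Ω → ℝ) : Prop :=
  Tendsto (fun x : ℝ =>
      pr μ {ω | max (Xi ω) 0 > x ∧ max (Xj ω) 0 > x} / (tail μ Xi x + tail μ Xj x))
    atTop (nhds 0) ∧
  Tendsto (fun x : ℝ =>
      pr μ {ω | max (-Xi ω) 0 > x ∧ Xj ω > x} / (tail μ Xi x + tail μ Xj x))
    atTop (nhds 0)

/-- The requirements on an auxiliary function `b` from Assumption A1:
`b > 0`, `b(x) → ∞` and `b(x)/x → 0`. -/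
def A1fun (b : ℝ → ℝ) : Prop :=
  (∀ x, 0 < b x) ∧ Tendsto b atTop atTop ∧ Tendsto (fun x => b x / x) atTop (nhds 0)

/-- The little-o condition of Assumption A1 for the ordered pair `(Xi, Θi), (Xj, Θj)`:
`P[Θi > bi(xi)] = o(P[Θi Xi > xi, Θj Xj > xj])` as `xi ∧ xj → ∞`. -/
def A1pair (μ : Measure Ω) (Xi Θi Xj Θj : Ω → ℝ) (bi : ℝ → ℝ) : Prop :=
  Tendsto (fun p : ℝ × ℝ =>
      pr μ {ω | Θi ω > bi p.1} /
        pr μ {ω | Θi ω * Xi ω > p.1 ∧ Θj ω * Xj ω > p.2})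
    (atTop ×ˢ atTop) (nhds 0)

/-- Assumption A2 for an ordered pair, with function `gij`:
`P[|Xi| > xi, Xj > xj | Θi = θi, Θj = θj] ~ gij(θi,θj) ⬝ P[|Xi| > xi, Xj > xj]`
as `xi ∧ xj → ∞`, uniformly over the supports. -/
def A2pair (μ : Measure Ω) (Xi Θi Xj Θj : Ω → ℝ) (gij : ℝ → ℝ → ℝ) : Prop :=
  Measurable (Function.uncurry gij) ∧
  (∀ θi θj : ℝ, 0 ≤ θi → 0 ≤ θj → 0 < gij θi θj) ∧
  ∃ cp : ℝ → ℝ → ℝ → ℝ → ℝ,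
    (∀ θi ∈ supp μ Θi, ∀ θj ∈ supp μ Θj, ∀ xi xj : ℝ,
      IsCondProb2 μ Θi Θj {ω | |Xi ω| > xi ∧ Xj ω > xj} θi θj (cp θi θj xi xj)) ∧
    TendstoUniformlyOn
      (fun (x : ℝ × ℝ) (θ : ℝ × ℝ) =>
        cp θ.1 θ.2 x.1 x.2 / (gij θ.1 θ.2 * pr μ {ω | |Xi ω| > x.1 ∧ Xj ω > x.2}))
      (fun _ => 1) (atTop ×ˢ atTop) (supp μ Θi ×ˢ supp μ Θj)

/-- Assumption A3 (A3') for a single pair `(X, Θ)` with function `h`: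
`P[X > x | Θ = θ] ~ h(θ) ⬝ P[X > x]` as `x → ∞`, uniformly over the support of `Θ`. -/
def A3' (μ : Measure Ω) (X Θ : Ω → ℝ) (h : ℝ → ℝ) : Prop :=
  (∀ θ : ℝ, 0 ≤ θ → 0 < h θ) ∧
  ∃ cp : ℝ → ℝ → ℝ,
    (∀ θ ∈ supp μ Θ, ∀ x : ℝ, IsCondProb μ Θ {ω | X ω > x} θ (cp θ x)) ∧
    TendstoUniformlyOn (fun (x : ℝ) (θ : ℝ) => cp θ x / (h θ * tail μ X x))
      (fun _ => 1) atTop (supp μ Θ)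

/-- The additional two-sided uniform asymptotic bounds of Assumption A4, for one ordered
pair, with constants `L ≤ U`:
`L gij(θi,θj) P[Xi > xi, Xj > xj] ≲ P[Xi > xi, Xj > xj | Θi = θi, Θj = θj]
   ≲ U gij(θi,θj) P[Xi > xi, Xj > xj]` as `xi ∧ xj → ∞`, uniformly over the supports. -/
def A4pair (μ : Measure Ω) (Xi Θi Xj Θj : Ω → ℝ) (gij : ℝ → ℝ → ℝ) (L U : ℝ) : Prop :=
  ∃ cp : ℝ → ℝ → ℝ → ℝ → ℝ,
    (∀ θi ∈ supp μ Θi, ∀ θj ∈ supp μ Θj, ∀ xi xj : ℝ,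
      IsCondProb2 μ Θi Θj {ω | Xi ω > xi ∧ Xj ω > xj} θi θj (cp θi θj xi xj)) ∧
    ∀ ε > (0:ℝ), ∀ᶠ x : ℝ × ℝ in atTop ×ˢ atTop,
      ∀ θi ∈ supp μ Θi, ∀ θj ∈ supp μ Θj,
        (1 - ε) * (L * (gij θi θj * pr μ {ω | Xi ω > x.1 ∧ Xj ω > x.2})) ≤
            cp θi θj x.1 x.2 ∧
          cp θi θj x.1 x.2 ≤
            (1 + ε) * (U * (gij θi θj * pr μ {ω | Xi ω > x.1 ∧ Xj ω > x.2}))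

/-- Assumption A1 for a finite family. -/
def A1 (μ : Measure Ω) {n : ℕ} (X Θ : Fin n → Ω → ℝ) (b : Fin n → ℝ → ℝ) : Prop :=
  (∀ i, A1fun (b i)) ∧
  ∀ i j, i ≠ j → A1pair μ (X i) (Θ i) (X j) (Θ j) (b i)

/-- Assumption A2 for a finite family. -/
def A2 (μ : Measure Ω) {n : ℕ} (X Θ : Fin n → Ω → ℝ)
    (g : Fin n → Fin n → ℝ → ℝ → ℝ) : Prop :=
  ∀ i j, i ≠ j → A2pair μ (X i) (Θ i) (X j) (Θ j) (g i j)

/-- Assumption A3 for a finite family. -/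
def A3 (μ : Measure Ω) {n : ℕ} (X Θ : Fin n → Ω → ℝ) (h : Fin n → ℝ → ℝ) : Prop :=
  ∀ i, A3' μ (X i) (Θ i) (h i)

/-- Assumption A4 for a finite family. -/
def A4 (μ : Measure Ω) {n : ℕ} (X Θ : Fin n → Ω → ℝ)
    (g : Fin n → Fin n → ℝ → ℝ → ℝ) : Prop :=
  A2 μ X Θ g ∧
  ∃ L U : ℝ, 0 < L ∧ L ≤ U ∧
    ∀ i j, i ≠ j → A4pair μ (X i) (Θ i) (X j) (Θ j) (g i j) L U

/-- Pairwise tail asymptotic independence of a finite family. -/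
def pTAI (μ : Measure Ω) {n : ℕ} (X : Fin n → Ω → ℝ) : Prop :=
  ∀ i j, i ≠ j → TAIpair μ (X i) (X j)

/-- Pairwise quasi-asymptotic independence of a finite family. -/
def pQAI (μ : Measure Ω) {n : ℕ} (X : Fin n → Ω → ℝ) : Prop :=
  ∀ i j, i ≠ j → QAIpair μ (X i) (X j)

/-- The randomly weighted and stopped sum `S_N^Θ`. -/
def SNsum (Θs Xs : ℕ → Ω → ℝ) (N : Ω → ℕ) (ω : Ω) : ℝ :=
  ∑ i ∈ Finset.range (N ω), Θs i ω * Xs i ω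

/-- The randomly stopped maximum of weighted sums `S_(N)^Θ` (equal to `0` when `N = 0`). -/
def SNmax (Θs Xs : ℕ → Ω → ℝ) (N : Ω → ℕ) (ω : Ω) : ℝ :=
  ⨆ k ∈ Finset.range (N ω), ∑ i ∈ Finset.range (k + 1), Θs i ω * Xs i ω

/-- The randomly stopped maximum of weighted summands `X_(N)^Θ` (equal to `0` when `N = 0`). -/
def XNmax (Θs Xs : ℕ → Ω → ℝ) (N : Ω → ℕ) (ω : Ω) : ℝ :=
  ⨆ i ∈ Finset.range (N ω), Θs i ω * Xs i ω

/-!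
Write `T(x) = P[ΘX > x]` and `C = E[Θ^α h(Θ)]`. Integrating Assumption A3' against the law of `Θ`
gives `P[X > y, Θ ∈ S] ≈ F̄(y) ∫_{Θ ∈ S} h(Θ) dP` as `y → ∞`, uniformly in Borel sets `S`.
On a cell `{s < Θ ≤ r s}` the event `{ΘX > x}` lies between `{X > x / s}` and `{X > x / (r s)}`, so
by regular variation its probability is `∫_{cell} Θ^α h(Θ) dP ⬝ F̄(x)` up to factors `r^{±α}`;
summing over a finite geometric grid gives `T(x) ≳ C F̄(x)`. For the matching upper bound the
rest of the range of `Θ` is negligible: `Θ ≤ a` costs about `a^α F̄(x)`; on `b < Θ ≤ x / K`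
dyadic cells and the Potter bound `F̄(x / s) ≤ (2s)^ρ F̄(x)` cost at most
`4^ρ E[Θ^ρ h(Θ); Θ > b] F̄(x)`; and `P[Θ > x / K] = o(T(x))` by hypothesis.
Regular variation of `ΘX` then follows from `T ~ C F̄`.
-/

variable {μ : Measure Ω} {X Θ : Ω → ℝ} {h : ℝ → ℝ} {α ρ : ℝ}

lemma tail_nonneg (μ : Measure Ω) (X : Ω → ℝ) (x : ℝ) : 0 ≤ tail μ X x := ENNReal.toReal_nonneg

lemma tail_antitone [IsFiniteMeasure μ] : Antitone (tail μ X) := fun _ _ hab =>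
  measureReal_mono fun _ (hω : _ < _) => hab.trans_lt hω

lemma supp_eq_support_map (hΘm : Measurable Θ) : supp μ Θ = (μ.map Θ).support := by
  ext θ
  rw [Metric.nhds_basis_closedBall.mem_measureSupport]
  refine forall₂_congr fun δ _ => ?_
  rw [Measure.map_apply hΘm Metric.isClosed_closedBall.measurableSet, Real.closedBall_eq_Icc]
  rfl

lemma ae_mem_supp (hΘm : Measurable Θ) : ∀ᵐ ω ∂μ, Θ ω ∈ supp μ Θ := by
  rw [supp_eq_support_map hΘm]
  exact ae_of_ae_map hΘm.aemeasurable Measure.support_mem_ae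

lemma supp_subset_Ici (hΘnn : ∀ ω, 0 ≤ Θ ω) : supp μ Θ ⊆ Ici 0 := by
  refine fun θ hθ => mem_Ici.2 (le_of_not_gt fun hneg => ?_)
  have hempty : {ω | Θ ω ∈ Icc (θ - -θ / 2) (θ + -θ / 2)} = ∅ :=
    eq_empty_of_forall_notMem fun ω hω => by linarith [hΘnn ω, hω.2]
  have hpos := hθ (-θ / 2) (by linarith)
  rw [hempty, measure_empty] at hpos
  exact lt_irrefl 0 hpos

lemma IsCondProb.le_one [IsFiniteMeasure μ] {A : Set Ω} {θ c : ℝ}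
    (hc : IsCondProb μ Θ A θ c) : c ≤ 1 :=
  le_of_tendsto hc <| .of_forall fun _ =>
    div_le_one_of_le₀ (measureReal_mono inter_subset_right) ENNReal.toReal_nonneg

/-- A version of `θ ↦ P[A | Θ = θ]`: the density of `P[A ∩ {Θ ∈ ·}]` with respect to the law
of `Θ`. -/
def condProbRN (μ : Measure Ω) (Θ : Ω → ℝ) (A : Set Ω) (θ : ℝ) : ℝ :=
  (((μ.restrict A).map Θ).rnDeriv (μ.map Θ) θ).toReal

lemma measurable_condProbRN (A : Set Ω) : Measurable (condProbRN μ Θ A) :=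
  (Measure.measurable_rnDeriv _ _).ennreal_toReal

lemma integrable_condProbRN_comp [IsFiniteMeasure μ] (hΘm : Measurable Θ) (A : Set Ω) :
    Integrable (fun ω => condProbRN μ Θ A (Θ ω)) μ :=
  (integrable_map_measure (measurable_condProbRN A).aestronglyMeasurable
    hΘm.aemeasurable).mp Measure.integrable_toReal_rnDeriv

lemma pr_inter_preimage_eq_setIntegral [IsFiniteMeasure μ] (hΘm : Measurable Θ) (A : Set Ω)
    {S : Set ℝ} (hS : MeasurableSet S) :
    pr μ (A ∩ Θ ⁻¹' S) = ∫ ω in Θ ⁻¹' S, condProbRN μ Θ A (Θ ω) ∂μ := by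
  rw [← setIntegral_map hS (measurable_condProbRN A).aestronglyMeasurable hΘm.aemeasurable]
  unfold condProbRN
  rw [Measure.setIntegral_toReal_rnDeriv
      ((Measure.absolutelyContinuous_of_le Measure.restrict_le_self).map hΘm),
    measureReal_def, Measure.map_apply hΘm hS, Measure.restrict_apply (hΘm hS), inter_comm]
  rfl

lemma IsCondProb.ae_eq_condProbRN [IsFiniteMeasure μ] (hΘm : Measurable Θ) (A : Set Ω) :
    ∀ᵐ θ ∂(μ.map Θ), ∀ c, IsCondProb μ Θ A θ c → c = condProbRN μ Θ A θ := by
  filter_upwards [Besicovitch.ae_tendsto_rnDeriv ((μ.restrict A).map Θ) (μ.map Θ),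
    Measure.rnDeriv_lt_top ((μ.restrict A).map Θ) (μ.map Θ)] with θ hlim hfin c hc
  refine tendsto_nhds_unique hc (((ENNReal.tendsto_toReal hfin.ne).comp hlim).congr fun δ => ?_)
  have hball : Θ ⁻¹' Metric.closedBall θ δ = {ω | Θ ω ∈ Icc (θ - δ) (θ + δ)} := by
    ext ω; simp [Real.closedBall_eq_Icc]
  simp only [Function.comp_apply, ENNReal.toReal_div,
    Measure.map_apply hΘm Metric.isClosed_closedBall.measurableSet,
    Measure.restrict_apply (hΘm Metric.isClosed_closedBall.measurableSet), hball, inter_comm]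
  rfl

/-- `P[X > y, Θ ∈ S] ~ (∫_{Θ ∈ S} h(Θ) dμ) ⬝ P[X > y]` as `y → ∞`, uniformly in Borel sets `S`:
the integrated form of Assumption A3'. -/
def TailFactorizes (μ : Measure Ω) (X Θ : Ω → ℝ) (h : ℝ → ℝ) : Prop :=
  ∀ ε > 0, ∀ᶠ y in atTop, ∀ S : Set ℝ, MeasurableSet S →
    (1 - ε) * ((∫ ω in Θ ⁻¹' S, h (Θ ω) ∂μ) * tail μ X y) ≤ pr μ ({ω | X ω > y} ∩ Θ ⁻¹' S) ∧
      pr μ ({ω | X ω > y} ∩ Θ ⁻¹' S) ≤ (1 + ε) * ((∫ ω in Θ ⁻¹' S, h (Θ ω) ∂μ) * tail μ X y)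

theorem A3'.tailFactorizes [IsFiniteMeasure μ] (hA3 : A3' μ X Θ h) (hΘm : Measurable Θ)
    (hΘnn : ∀ ω, 0 ≤ Θ ω) (hF : ∀ x, 0 ≤ x → 0 < tail μ X x)
    (hIh : Integrable (fun ω => h (Θ ω)) μ) : TailFactorizes μ X Θ h := by
  obtain ⟨hpos, cp, hcp, hunif⟩ := hA3
  intro ε hε
  filter_upwards [(Metric.tendstoUniformlyOn_iff.1 hunif) ε hε, eventually_ge_atTop 0]
    with y hy hy0 S hS
  set A := {ω | X ω > y}
  have hclose : ∀ᵐ ω ∂μ, |condProbRN μ Θ A (Θ ω) - h (Θ ω) * tail μ X y|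
      ≤ ε * (h (Θ ω) * tail μ X y) := by
    filter_upwards [ae_of_ae_map hΘm.aemeasurable (IsCondProb.ae_eq_condProbRN hΘm A),
      ae_mem_supp hΘm] with ω hω hsupp
    have hd : 0 < h (Θ ω) * tail μ X y := mul_pos (hpos _ (hΘnn ω)) (hF y hy0)
    rw [← hω _ (hcp _ hsupp y), ← div_mul_cancel₀ (cp (Θ ω) y) hd.ne', ← sub_one_mul, abs_mul,
      abs_of_pos hd, abs_sub_comm, ← Real.dist_eq]
    exact mul_le_mul_of_nonneg_right (hy _ hsupp).le hd.le
  have hint : ∀ c : ℝ, ∫ ω in Θ ⁻¹' S, c * (h (Θ ω) * tail μ X y) ∂μ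
      = c * ((∫ ω in Θ ⁻¹' S, h (Θ ω) ∂μ) * tail μ X y) := fun c => by
    rw [integral_const_mul, integral_mul_const]
  rw [pr_inter_preimage_eq_setIntegral hΘm A hS, ← hint, ← hint]
  have hRN := (integrable_condProbRN_comp (μ := μ) hΘm A).integrableOn (s := Θ ⁻¹' S)
  have hmul := fun c : ℝ => ((hIh.mul_const (tail μ X y)).const_mul c).integrableOn (s := Θ ⁻¹' S)
  constructor
  · refine setIntegral_mono_ae (hmul _) hRN (hclose.mono fun ω hω => ?_)
    linarith [(abs_le.1 hω).1]
  · refine setIntegral_mono_ae hRN (hmul _) (hclose.mono fun ω hω => ?_)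
    linarith [(abs_le.1 hω).2]

theorem A3'.exists_le_of_mem_supp [IsFiniteMeasure μ] (hA3 : A3' μ X Θ h)
    (hΘnn : ∀ ω, 0 ≤ Θ ω) (hF : ∀ x, 0 ≤ x → 0 < tail μ X x) :
    ∃ B, ∀ θ ∈ supp μ Θ, h θ ≤ B := by
  obtain ⟨hpos, cp, hcp, hunif⟩ := hA3
  obtain ⟨y, hy⟩ := ((Metric.tendstoUniformlyOn_iff.1 hunif (1 / 2) (by norm_num)).and
    (eventually_ge_atTop 0)).exists
  refine ⟨2 / tail μ X y, fun θ hθ => ?_⟩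
  have hd : 0 < h θ * tail μ X y := mul_pos (hpos θ (supp_subset_Ici hΘnn hθ)) (hF y hy.2)
  have hhalf : 1 / 2 < cp θ y / (h θ * tail μ X y) := by
    linarith [(abs_lt.1 (Real.dist_eq 1 _ ▸ hy.1 θ hθ)).2]
  rw [lt_div_iff₀ hd] at hhalf
  rw [le_div_iff₀ (hF y hy.2)]
  linarith [(hcp θ hθ y).le_one]

/-- `h` is not assumed measurable: measurability of `h ∘ Θ` is recovered from that of
`Θ^ρ h(Θ)`. -/
lemma aestronglyMeasurable_comp_of_rpow_mul (hΘm : Measurable Θ) (hΘnn : ∀ ω, 0 ≤ Θ ω)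
    (hρ : ρ ≠ 0) (hm : AEStronglyMeasurable (fun ω => Θ ω ^ ρ * h (Θ ω)) μ) :
    AEStronglyMeasurable (fun ω => h (Θ ω)) μ := by
  have hsplit : (fun ω => h (Θ ω))
      = fun ω => (Θ ⁻¹' {0}).indicator (fun _ => h 0) ω + Θ ω ^ (-ρ) * (Θ ω ^ ρ * h (Θ ω)) := by
    funext ω
    rcases (hΘnn ω).eq_or_lt with h0 | h0
    · simp [← h0, Real.zero_rpow hρ, Real.zero_rpow (neg_ne_zero.2 hρ)]
    · rw [indicator_of_notMem (by simpa using h0.ne'), ← mul_assoc, ← Real.rpow_add h0,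
        neg_add_cancel, Real.rpow_zero, one_mul, zero_add]
  rw [hsplit]
  exact ((measurable_const.indicator (hΘm (measurableSet_singleton 0))).aestronglyMeasurable).add
    ((hΘm.pow_const _).aestronglyMeasurable.mul hm)

theorem A3'.integrable_comp [IsFiniteMeasure μ] (hA3 : A3' μ X Θ h) (hΘm : Measurable Θ)
    (hΘnn : ∀ ω, 0 ≤ Θ ω) (hF : ∀ x, 0 ≤ x → 0 < tail μ X x) (hρ : ρ ≠ 0)
    (hm : AEStronglyMeasurable (fun ω => Θ ω ^ ρ * h (Θ ω)) μ) :
    Integrable (fun ω => h (Θ ω)) μ := by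
  obtain ⟨B, hB⟩ := hA3.exists_le_of_mem_supp hΘnn hF
  refine (integrable_const B).mono' (aestronglyMeasurable_comp_of_rpow_mul hΘm hΘnn hρ hm) ?_
  filter_upwards [ae_mem_supp hΘm] with ω hω
  rw [Real.norm_eq_abs, abs_of_pos (hA3.1 _ (hΘnn ω))]
  exact hB _ hω

lemma integrable_rpow_mul_of_le {g : Ω → ℝ} (hΘm : Measurable Θ) (hΘnn : ∀ ω, 0 ≤ Θ ω)
    (hg0 : ∀ ω, 0 ≤ g ω) (hg : Integrable g μ) {β : ℝ}
    (hρg : Integrable (fun ω => Θ ω ^ ρ * g ω) μ) (hβ : 0 ≤ β) (hβρ : β ≤ ρ) :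
    Integrable (fun ω => Θ ω ^ β * g ω) μ := by
  refine (hg.add hρg).mono' ((hΘm.pow_const β).aestronglyMeasurable.mul hg.1)
    (.of_forall fun ω => ?_)
  have hpow : Θ ω ^ β ≤ 1 + Θ ω ^ ρ := by
    rcases le_total (Θ ω) 1 with h1 | h1
    · linarith [Real.rpow_le_one (hΘnn ω) h1 hβ, Real.rpow_nonneg (hΘnn ω) ρ]
    · linarith [Real.rpow_le_rpow_of_exponent_le h1 hβρ]
  rw [Real.norm_eq_abs, abs_of_nonneg (mul_nonneg (Real.rpow_nonneg (hΘnn ω) β) (hg0 ω))]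
  simpa [add_mul] using mul_le_mul_of_nonneg_right hpow (hg0 ω)

lemma integral_rpow_mul_pos [IsFiniteMeasure μ] {g : Ω → ℝ} (hΘnn : ∀ ω, 0 ≤ Θ ω)
    (hΘnd : NonDegAtZero μ Θ) (hg : ∀ ω, 0 < g ω) {β : ℝ}
    (hβg : Integrable (fun ω => Θ ω ^ β * g ω) μ) :
    0 < ∫ ω, Θ ω ^ β * g ω ∂μ := by
  refine (integral_pos_iff_support_of_nonneg
    (fun ω => mul_nonneg (Real.rpow_nonneg (hΘnn ω) β) (hg ω).le) hβg).2
    (hΘnd.trans_le (measure_mono fun ω hω => ?_))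
  exact (mul_pos (Real.rpow_pos_of_pos ((hΘnn ω).lt_of_ne (Ne.symm hω)) β) (hg ω)).ne'

lemma div_lt_of_lt_mul_of_le {θ t x y : ℝ} (hθ : 0 ≤ θ) (hθt : θ ≤ t) (hx : 0 < x) (h : x < θ * y) :
    x / t < y := by
  have hθy : 0 < θ * y := hx.trans h
  have hy : 0 < y := pos_of_mul_pos_right hθy hθ
  rw [div_lt_iff₀ ((pos_of_mul_pos_left hθy hy.le).trans_le hθt)]
  nlinarith

lemma lt_mul_of_div_lt_of_le {θ s x y : ℝ} (hs : 0 < s) (hsθ : s ≤ θ) (hx : 0 ≤ x) (h : x / s < y) :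
    x < θ * y := by
  have hy : 0 < y := (div_nonneg hx hs.le).trans_lt h
  rw [div_lt_iff₀ hs] at h
  nlinarith

lemma sum_Ioc_eq_of_additive {m : Set ℝ → ℝ}
    (hm : ∀ a b c, a ≤ b → b ≤ c → m (Ioc a c) = m (Ioc a b) + m (Ioc b c))
    {t : ℕ → ℝ} (ht : Monotone t) (n : ℕ) :
    ∑ k ∈ Finset.range n, m (Ioc (t k) (t (k + 1))) = m (Ioc (t 0) (t n)) := by
  induction n with
  | zero =>
    rw [Finset.sum_range_zero]
    linarith [hm (t 0) (t 0) (t 0) le_rfl le_rfl]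
  | succ n ih =>
    rw [Finset.sum_range_succ, ih, hm _ _ _ (ht n.zero_le) (ht n.le_succ)]

lemma pr_inter_preimage_Ioc_add [IsFiniteMeasure μ] {E : Set Ω} (hE : MeasurableSet E)
    (hΘm : Measurable Θ) {a b c : ℝ} (hab : a ≤ b) (hbc : b ≤ c) :
    pr μ (E ∩ Θ ⁻¹' Ioc a c) = pr μ (E ∩ Θ ⁻¹' Ioc a b) + pr μ (E ∩ Θ ⁻¹' Ioc b c) := by
  rw [← Ioc_union_Ioc_eq_Ioc hab hbc, preimage_union, inter_union_distrib_left]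
  exact measureReal_union ((Ioc_disjoint_Ioc_of_le le_rfl).preimage Θ |>.mono
    inter_subset_right inter_subset_right) (hE.inter (hΘm measurableSet_Ioc))

lemma setIntegral_preimage_Ioc_add {g : Ω → ℝ} (hg : Integrable g μ) (hΘm : Measurable Θ)
    {a b c : ℝ} (hab : a ≤ b) (hbc : b ≤ c) :
    ∫ ω in Θ ⁻¹' Ioc a c, g ω ∂μ
      = ∫ ω in Θ ⁻¹' Ioc a b, g ω ∂μ + ∫ ω in Θ ⁻¹' Ioc b c, g ω ∂μ := by
  rw [← Ioc_union_Ioc_eq_Ioc hab hbc, preimage_union]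
  exact setIntegral_union ((Ioc_disjoint_Ioc_of_le le_rfl).preimage Θ)
    (hΘm measurableSet_Ioc) hg.integrableOn hg.integrableOn

lemma mul_setIntegral_le_setIntegral_rpow_mul {g : Ω → ℝ} (hΘm : Measurable Θ)
    (hg0 : ∀ ω, 0 ≤ g ω) (hg : Integrable g μ) {β : ℝ} (hβ : 0 ≤ β)
    (hβg : Integrable (fun ω => Θ ω ^ β * g ω) μ) {s t : ℝ} (hs : 0 ≤ s) :
    s ^ β * ∫ ω in Θ ⁻¹' Ioc s t, g ω ∂μ ≤ ∫ ω in Θ ⁻¹' Ioc s t, Θ ω ^ β * g ω ∂μ := by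
  rw [← integral_const_mul]
  exact setIntegral_mono_on (hg.const_mul _).integrableOn hβg.integrableOn
    (hΘm measurableSet_Ioc) fun ω hω =>
      mul_le_mul_of_nonneg_right (Real.rpow_le_rpow hs hω.1.le hβ) (hg0 ω)

lemma setIntegral_rpow_mul_le_mul_setIntegral {g : Ω → ℝ} (hΘm : Measurable Θ)
    (hg0 : ∀ ω, 0 ≤ g ω) (hg : Integrable g μ) {β : ℝ} (hβ : 0 ≤ β)
    (hβg : Integrable (fun ω => Θ ω ^ β * g ω) μ) {s t : ℝ} (hs : 0 ≤ s) :
    ∫ ω in Θ ⁻¹' Ioc s t, Θ ω ^ β * g ω ∂μ ≤ t ^ β * ∫ ω in Θ ⁻¹' Ioc s t, g ω ∂μ := by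
  rw [← integral_const_mul]
  exact setIntegral_mono_on hβg.integrableOn (hg.const_mul _).integrableOn
    (hΘm measurableSet_Ioc) fun ω hω =>
      mul_le_mul_of_nonneg_right (Real.rpow_le_rpow (hs.trans hω.1.le) hω.2 hβ) (hg0 ω)

lemma tendsto_setIntegral_preimage_Ioi {g : Ω → ℝ} (hg : Integrable g μ) (hΘm : Measurable Θ) :
    Tendsto (fun b => ∫ ω in Θ ⁻¹' Ioi b, g ω ∂μ) atTop (𝓝 0) := by
  have hempty : ⋂ b : ℝ, Θ ⁻¹' Ioi b = ∅ :=
    eq_empty_of_forall_notMem fun ω hω => lt_irrefl (Θ ω) (mem_iInter.1 hω (Θ ω))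
  simpa [hempty] using tendsto_setIntegral_of_antitone (fun b => hΘm measurableSet_Ioi)
    (fun a b hab => preimage_mono (Ioi_subset_Ioi hab)) ⟨0, hg.integrableOn⟩

lemma tendsto_setIntegral_preimage_Ioc {g : Ω → ℝ} (hg : Integrable g μ) (hΘm : Measurable Θ) :
    Tendsto (fun p : ℝ × ℝ => ∫ ω in Θ ⁻¹' Ioc p.1 p.2, g ω ∂μ) (𝓝[>] 0 ×ˢ atTop)
      (𝓝 (∫ ω in Θ ⁻¹' Ioi 0, g ω ∂μ)) := by
  simp_rw [← integral_indicator (hΘm measurableSet_Ioc),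
    ← integral_indicator (hΘm measurableSet_Ioi)]
  refine tendsto_integral_filter_of_dominated_convergence (fun ω => ‖g ω‖)
    (.of_forall fun p => hg.1.indicator (hΘm measurableSet_Ioc)) (.of_forall fun p =>
      .of_forall fun ω => norm_indicator_le_norm_self g ω) hg.norm (.of_forall fun ω => ?_)
  refine tendsto_const_nhds.congr' ?_
  rcases le_or_gt (Θ ω) 0 with hθ | hθ
  · filter_upwards [prod_mem_prod self_mem_nhdsWithin univ_mem] with p hp
    rw [indicator_of_notMem (show ω ∉ Θ ⁻¹' Ioi 0 from hθ.not_gt),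
      indicator_of_notMem (show ω ∉ Θ ⁻¹' Ioc p.1 p.2 from
        fun h => hθ.not_gt ((mem_Ioi.1 hp.1).trans h.1))]
  · filter_upwards [prod_mem_prod (Ioo_mem_nhdsGT hθ) (Ici_mem_atTop (Θ ω))] with p hp
    rw [indicator_of_mem (show ω ∈ Θ ⁻¹' Ioi 0 from hθ),
      indicator_of_mem (show ω ∈ Θ ⁻¹' Ioc p.1 p.2 from ⟨hp.1.2, hp.2⟩)]

lemma RegVar.tendsto_tail_div (hR : RegVar μ X α) {t : ℝ} (ht : 0 < t) :
    Tendsto (fun x => tail μ X (x / t) / tail μ X x) atTop (𝓝 (t ^ α)) := by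
  have hinv : (t⁻¹) ^ (-α) = t ^ α := by
    rw [Real.rpow_neg (inv_nonneg.2 ht.le), Real.inv_rpow ht.le, inv_inv]
  simpa only [hinv, div_eq_inv_mul] using hR t⁻¹ (inv_pos.2 ht)

lemma RegVar.eventually_tail_div_le (hR : RegVar μ X α) (hF : ∀ x, 0 ≤ x → 0 < tail μ X x)
    {t c : ℝ} (ht : 0 < t) (hc : t ^ α < c) :
    ∀ᶠ x in atTop, tail μ X (x / t) ≤ c * tail μ X x := by
  filter_upwards [(hR.tendsto_tail_div ht).eventually (eventually_le_nhds hc),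
    eventually_ge_atTop 0] with x hx hx0
  rwa [div_le_iff₀ (hF x hx0)] at hx

lemma RegVar.eventually_le_tail_div (hR : RegVar μ X α) (hF : ∀ x, 0 ≤ x → 0 < tail μ X x)
    {t c : ℝ} (ht : 0 < t) (hc : c < t ^ α) :
    ∀ᶠ x in atTop, c * tail μ X x ≤ tail μ X (x / t) := by
  filter_upwards [(hR.tendsto_tail_div ht).eventually (eventually_ge_nhds hc),
    eventually_ge_atTop 0] with x hx hx0
  rwa [le_div_iff₀ (hF x hx0)] at hx

lemma Antitone.le_two_mul_rpow_mul {f : ℝ → ℝ} (hf : Antitone f) (hf0 : ∀ x, 0 ≤ f x)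
    (hρ : 0 ≤ ρ) {x₁ : ℝ} (hx₁ : 0 ≤ x₁) (hhalf : ∀ x, x₁ ≤ x → f (x / 2) ≤ 2 ^ ρ * f x)
    {s x : ℝ} (hs : 1 ≤ s) (hx : x₁ ≤ x / s) : f (x / s) ≤ (2 * s) ^ ρ * f x := by
  have hdyadic : ∀ k : ℕ, ∀ x, x₁ ≤ x / 2 ^ k → f (x / 2 ^ (k + 1)) ≤ (2 ^ (k + 1)) ^ ρ * f x := by
    intro k
    induction k with
    | zero => simpa using hhalf
    | succ k ih =>
      intro x hx
      have hx0 : 0 ≤ x := le_of_not_gt fun hneg =>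
        (div_neg_of_neg_of_pos hneg (by positivity)).not_ge (hx₁.trans hx)
      have hx' : x₁ ≤ x := hx.trans (div_le_self hx0 (one_le_pow₀ one_le_two))
      calc f (x / 2 ^ (k + 1 + 1)) = f (x / 2 / 2 ^ (k + 1)) := by rw [div_div, pow_succ' 2 (k + 1)]
        _ ≤ (2 ^ (k + 1)) ^ ρ * f (x / 2) := ih _ (by rwa [div_div, ← pow_succ'])
        _ ≤ (2 ^ (k + 1)) ^ ρ * (2 ^ ρ * f x) := by gcongr; exact hhalf x hx'
        _ = (2 ^ (k + 1 + 1)) ^ ρ * f x := by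
          rw [pow_succ _ (k + 1), Real.mul_rpow (by positivity) zero_le_two, mul_assoc]
  obtain ⟨k, hks, hsk⟩ := exists_nat_pow_near hs one_lt_two
  have hx0 : 0 ≤ x := le_of_not_gt fun hneg =>
    (div_neg_of_neg_of_pos hneg (zero_lt_one.trans_le hs)).not_ge (hx₁.trans hx)
  calc f (x / s) ≤ f (x / 2 ^ (k + 1)) := hf (div_le_div_of_nonneg_left hx0 (by positivity) hsk.le)
    _ ≤ (2 ^ (k + 1)) ^ ρ * f x :=
      hdyadic k x (hx.trans (div_le_div_of_nonneg_left hx0 (by positivity) hks))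
    _ ≤ (2 * s) ^ ρ * f x := by
      gcongr
      · exact hf0 x
      · rw [pow_succ']; linarith

lemma RegVar.exists_tail_div_le [IsFiniteMeasure μ] (hR : RegVar μ X α)
    (hF : ∀ x, 0 ≤ x → 0 < tail μ X x) (hαρ : α < ρ) (hρ : 0 ≤ ρ) :
    ∃ x₁, 0 ≤ x₁ ∧ ∀ s x, 1 ≤ s → x₁ ≤ x / s → tail μ X (x / s) ≤ (2 * s) ^ ρ * tail μ X x := by
  obtain ⟨x₁, hx₁⟩ := eventually_atTop.1 (hR.eventually_tail_div_le hF two_pos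
    (Real.rpow_lt_rpow_of_exponent_lt one_lt_two hαρ))
  refine ⟨max x₁ 0, le_max_right _ _, fun s x hs hx => ?_⟩
  exact Antitone.le_two_mul_rpow_mul tail_antitone (tail_nonneg μ X) hρ (le_max_right _ _)
    (fun y hy => hx₁ y ((le_max_left _ _).trans hy)) hs hx

theorem TailFactorizes.eventually_cell_bounds [IsFiniteMeasure μ] (hfac : TailFactorizes μ X Θ h)
    (hR : RegVar μ X α) (hF : ∀ x, 0 ≤ x → 0 < tail μ X x) (hΘm : Measurable Θ)
    (hh : ∀ ω, 0 ≤ h (Θ ω)) (hIh : Integrable (fun ω => h (Θ ω)) μ)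
    (hIα : Integrable (fun ω => Θ ω ^ α * h (Θ ω)) μ) (hα : 0 ≤ α) {e : ℝ} (he : 0 < e)
    (he1 : e ≤ 1) {s r : ℝ} (hs : 0 < s) (hr : 1 ≤ r) :
    ∀ᶠ x in atTop,
      (1 - e) ^ 2 * (∫ ω in Θ ⁻¹' Ioc s (r * s), Θ ω ^ α * h (Θ ω) ∂μ) * tail μ X x
          ≤ r ^ α * pr μ ({ω | Θ ω * X ω > x} ∩ Θ ⁻¹' Ioc s (r * s)) ∧
        pr μ ({ω | Θ ω * X ω > x} ∩ Θ ⁻¹' Ioc s (r * s))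
          ≤ (1 + e) ^ 2 * r ^ α * (∫ ω in Θ ⁻¹' Ioc s (r * s), Θ ω ^ α * h (Θ ω) ∂μ)
            * tail μ X x := by
  have hrs : 0 < r * s := mul_pos (one_pos.trans_le hr) hs
  set S := Ioc s (r * s)
  set m := ∫ ω in Θ ⁻¹' S, h (Θ ω) ∂μ
  have hm0 : 0 ≤ m := setIntegral_nonneg (hΘm measurableSet_Ioc) fun ω _ => hh ω
  have hIlo := mul_setIntegral_le_setIntegral_rpow_mul (t := r * s) hΘm hh hIh hα hIα hs.le
  have hIup := setIntegral_rpow_mul_le_mul_setIntegral (t := r * s) hΘm hh hIh hα hIα hs.le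
  have hlo : (1 - e) * s ^ α < s ^ α := by nlinarith [Real.rpow_pos_of_pos hs α]
  have hup : (r * s) ^ α < (1 + e) * (r * s) ^ α := by nlinarith [Real.rpow_pos_of_pos hrs α]
  filter_upwards [(tendsto_id.atTop_div_const hs).eventually (hfac e he),
    (tendsto_id.atTop_div_const hrs).eventually (hfac e he),
    hR.eventually_le_tail_div hF hs hlo, hR.eventually_tail_div_le hF hrs hup,
    eventually_gt_atTop 0] with x hkey₀ hkey₁ hreg₀ hreg₁ hx
  have hsub₀ : {ω | X ω > x / s} ∩ Θ ⁻¹' S ⊆ {ω | Θ ω * X ω > x} ∩ Θ ⁻¹' S :=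
    fun ω hω => ⟨lt_mul_of_div_lt_of_le hs hω.2.1.le hx.le hω.1, hω.2⟩
  have hsub₁ : {ω | Θ ω * X ω > x} ∩ Θ ⁻¹' S ⊆ {ω | X ω > x / (r * s)} ∩ Θ ⁻¹' S :=
    fun ω hω => ⟨div_lt_of_lt_mul_of_le (hs.le.trans hω.2.1.le) hω.2.2 hx hω.1, hω.2⟩
  have hF0 := tail_nonneg μ X x
  have he1' : 0 ≤ 1 - e := by linarith
  constructor
  · calc (1 - e) ^ 2 * (∫ ω in Θ ⁻¹' S, Θ ω ^ α * h (Θ ω) ∂μ) * tail μ X x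
        ≤ (1 - e) ^ 2 * ((r * s) ^ α * m) * tail μ X x := by gcongr
      _ = r ^ α * ((1 - e) * (m * ((1 - e) * s ^ α * tail μ X x))) := by
        rw [Real.mul_rpow (one_pos.trans_le hr).le hs.le]; ring
      _ ≤ r ^ α * ((1 - e) * (m * tail μ X (x / s))) := by gcongr
      _ ≤ r ^ α * pr μ ({ω | X ω > x / s} ∩ Θ ⁻¹' S) := by
        gcongr; exact (hkey₀ S measurableSet_Ioc).1
      _ ≤ r ^ α * pr μ ({ω | Θ ω * X ω > x} ∩ Θ ⁻¹' S) := by gcongr; exact measureReal_mono hsub₀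
  · calc pr μ ({ω | Θ ω * X ω > x} ∩ Θ ⁻¹' S)
        ≤ pr μ ({ω | X ω > x / (r * s)} ∩ Θ ⁻¹' S) := measureReal_mono hsub₁
      _ ≤ (1 + e) * (m * tail μ X (x / (r * s))) := (hkey₁ S measurableSet_Ioc).2
      _ ≤ (1 + e) * (m * ((1 + e) * (r * s) ^ α * tail μ X x)) := by gcongr
      _ = (1 + e) ^ 2 * r ^ α * (s ^ α * m) * tail μ X x := by
        rw [Real.mul_rpow (one_pos.trans_le hr).le hs.le]; ring
      _ ≤ (1 + e) ^ 2 * r ^ α * (∫ ω in Θ ⁻¹' S, Θ ω ^ α * h (Θ ω) ∂μ) * tail μ X x := by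
        gcongr

theorem TailFactorizes.eventually_grid_bounds [IsFiniteMeasure μ] (hfac : TailFactorizes μ X Θ h)
    (hR : RegVar μ X α) (hF : ∀ x, 0 ≤ x → 0 < tail μ X x) (hXm : Measurable X)
    (hΘm : Measurable Θ) (hh : ∀ ω, 0 ≤ h (Θ ω)) (hIh : Integrable (fun ω => h (Θ ω)) μ)
    (hIα : Integrable (fun ω => Θ ω ^ α * h (Θ ω)) μ) (hα : 0 ≤ α) {e : ℝ} (he : 0 < e)
    (he1 : e ≤ 1) {a r : ℝ} (ha : 0 < a) (hr : 1 ≤ r) (n : ℕ) :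
    ∀ᶠ x in atTop,
      (1 - e) ^ 2 * (∫ ω in Θ ⁻¹' Ioc a (a * r ^ n), Θ ω ^ α * h (Θ ω) ∂μ) * tail μ X x
          ≤ r ^ α * pr μ ({ω | Θ ω * X ω > x} ∩ Θ ⁻¹' Ioc a (a * r ^ n)) ∧
        pr μ ({ω | Θ ω * X ω > x} ∩ Θ ⁻¹' Ioc a (a * r ^ n))
          ≤ (1 + e) ^ 2 * r ^ α * (∫ ω in Θ ⁻¹' Ioc a (a * r ^ n), Θ ω ^ α * h (Θ ω) ∂μ)
            * tail μ X x := by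
  have hgrid : Monotone fun k : ℕ => a * r ^ k := fun j k hjk =>
    mul_le_mul_of_nonneg_left (pow_le_pow_right₀ hr hjk) ha.le
  have hcells := (eventually_all_finset (Finset.range n)).2 fun k _ =>
    hfac.eventually_cell_bounds hR hF hΘm hh hIh hIα hα he he1 (s := a * r ^ k) (by positivity) hr
  filter_upwards [hcells] with x hx
  simp only [show ∀ k, r * (a * r ^ k) = a * r ^ (k + 1) from fun k => by ring] at hx
  have hE : MeasurableSet {ω | Θ ω * X ω > x} := measurableSet_lt measurable_const (hΘm.mul hXm)
  have hP := sum_Ioc_eq_of_additive (m := fun S => pr μ ({ω | Θ ω * X ω > x} ∩ Θ ⁻¹' S))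
    (fun _ _ _ => pr_inter_preimage_Ioc_add hE hΘm) hgrid n
  have hI := sum_Ioc_eq_of_additive (m := fun S => ∫ ω in Θ ⁻¹' S, Θ ω ^ α * h (Θ ω) ∂μ)
    (fun _ _ _ => setIntegral_preimage_Ioc_add hIα hΘm) hgrid n
  simp only [pow_zero, mul_one] at hP hI
  rw [← hP, ← hI]
  simp only [Finset.mul_sum, Finset.sum_mul]
  exact ⟨Finset.sum_le_sum fun k hk => (hx k hk).1, Finset.sum_le_sum fun k hk => (hx k hk).2⟩


lemma setIntegral_Ioi_rpow_mul_eq_integral {g : Ω → ℝ} (hΘnn : ∀ ω, 0 ≤ Θ ω) (hα : 0 < α) :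
    ∫ ω in Θ ⁻¹' Ioi 0, Θ ω ^ α * g ω ∂μ = ∫ ω, Θ ω ^ α * g ω ∂μ :=
  setIntegral_eq_integral_of_forall_compl_eq_zero fun ω hω => by
    rw [(hΘnn ω).antisymm' (not_lt.1 hω), Real.zero_rpow hα.ne', zero_mul]

theorem TailFactorizes.eventually_mul_tail_lt [IsFiniteMeasure μ] (hfac : TailFactorizes μ X Θ h)
    (hR : RegVar μ X α) (hF : ∀ x, 0 ≤ x → 0 < tail μ X x) (hXm : Measurable X)
    (hΘm : Measurable Θ) (hΘnn : ∀ ω, 0 ≤ Θ ω) (hh : ∀ ω, 0 ≤ h (Θ ω))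
    (hIh : Integrable (fun ω => h (Θ ω)) μ) (hIα : Integrable (fun ω => Θ ω ^ α * h (Θ ω)) μ)
    (hα : 0 < α) {c : ℝ} (hc : c < ∫ ω, Θ ω ^ α * h (Θ ω) ∂μ) :
    ∀ᶠ x in atTop, c * tail μ X x < tail μ (fun ω => Θ ω * X ω) x := by
  set C := ∫ ω, Θ ω ^ α * h (Θ ω) ∂μ
  have hfactor : Tendsto (fun e : ℝ => (1 - e) ^ 2 / (1 + e) * C) (𝓝 0) (𝓝 C) := by
    have h1 : Tendsto (fun e : ℝ => 1 - e) (𝓝 0) (𝓝 1) := by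
      simpa using (tendsto_id (x := 𝓝 (0:ℝ))).const_sub 1
    have h2 : Tendsto (fun e : ℝ => 1 + e) (𝓝 0) (𝓝 1) := by
      simpa using (tendsto_id (x := 𝓝 (0:ℝ))).const_add 1
    simpa using ((h1.pow 2).div h2 one_ne_zero).mul_const C
  obtain ⟨e, ⟨hce, he1⟩, he⟩ := ((((hfactor.eventually (eventually_gt_nhds hc)).and
    (eventually_lt_nhds zero_lt_one)).filter_mono nhdsWithin_le_nhds).and
      (self_mem_nhdsWithin (s := Ioi 0))).exists
  have hk : 0 < (1 - e) ^ 2 / (1 + e) := div_pos (pow_pos (by linarith) 2) (by linarith)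
  set r := (1 + e) ^ α⁻¹
  have hrα : r ^ α = 1 + e := Real.rpow_inv_rpow (by linarith) hα.ne'
  have hr : 1 < r := Real.one_lt_rpow (by linarith) (inv_pos.2 hα)
  have hIlim := tendsto_setIntegral_preimage_Ioc hIα hΘm
  rw [setIntegral_Ioi_rpow_mul_eq_integral hΘnn hα] at hIlim
  obtain ⟨a, hab, ha⟩ := ((hIlim.eventually (eventually_gt_nhds
    ((div_lt_iff₀ hk).2 (by linarith : c < C * ((1 - e) ^ 2 / (1 + e)))))).curry.and
      self_mem_nhdsWithin).exists
  obtain ⟨n, hn⟩ := (((tendsto_pow_atTop_atTop_of_one_lt hr).const_mul_atTop ha).eventually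
    hab).exists
  filter_upwards [hfac.eventually_grid_bounds hR hF hXm hΘm hh hIh hIα hα.le he he1.le ha hr.le n,
    eventually_ge_atTop 0] with x hx hx0
  calc c * tail μ X x
      < (1 - e) ^ 2 / (1 + e) * (∫ ω in Θ ⁻¹' Ioc a (a * r ^ n), Θ ω ^ α * h (Θ ω) ∂μ)
        * tail μ X x := by
        gcongr
        · exact hF x hx0
        · exact (div_lt_iff₀' hk).1 hn
    _ = (1 - e) ^ 2 * (∫ ω in Θ ⁻¹' Ioc a (a * r ^ n), Θ ω ^ α * h (Θ ω) ∂μ) * tail μ X x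
        / r ^ α := by rw [hrα]; ring
    _ ≤ pr μ ({ω | Θ ω * X ω > x} ∩ Θ ⁻¹' Ioc a (a * r ^ n)) := by
        rw [div_le_iff₀' (by linarith)]; exact hx.1
    _ ≤ tail μ (fun ω => Θ ω * X ω) x := measureReal_mono inter_subset_left

lemma pr_inter_preimage_Ioc_two_mul_le [IsFiniteMeasure μ] (hΘm : Measurable Θ)
    (hh : ∀ ω, 0 ≤ h (Θ ω)) (hIh : Integrable (fun ω => h (Θ ω)) μ)
    (hIρ : Integrable (fun ω => Θ ω ^ ρ * h (Θ ω)) μ) (hρ : 0 ≤ ρ) {e y₀ x₁ : ℝ} (he : 0 < e)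
    (hkey : ∀ y ≥ y₀, ∀ S : Set ℝ, MeasurableSet S →
      pr μ ({ω | X ω > y} ∩ Θ ⁻¹' S) ≤ (1 + e) * ((∫ ω in Θ ⁻¹' S, h (Θ ω) ∂μ) * tail μ X y))
    (hpot : ∀ s x, 1 ≤ s → x₁ ≤ x / s → tail μ X (x / s) ≤ (2 * s) ^ ρ * tail μ X x)
    {s x : ℝ} (hs : 1 ≤ 2 * s) (hx : 0 < x) (hy₀ : y₀ ≤ x / (2 * s)) (hx₁ : x₁ ≤ x / (2 * s)) :
    pr μ ({ω | Θ ω * X ω > x} ∩ Θ ⁻¹' Ioc s (2 * s))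
      ≤ (1 + e) * 4 ^ ρ * (∫ ω in Θ ⁻¹' Ioc s (2 * s), Θ ω ^ ρ * h (Θ ω) ∂μ) * tail μ X x := by
  have hs0 : 0 ≤ s := by linarith
  have hm0 : 0 ≤ ∫ ω in Θ ⁻¹' Ioc s (2 * s), h (Θ ω) ∂μ :=
    setIntegral_nonneg (hΘm measurableSet_Ioc) fun ω _ => hh ω
  calc pr μ ({ω | Θ ω * X ω > x} ∩ Θ ⁻¹' Ioc s (2 * s))
      ≤ pr μ ({ω | X ω > x / (2 * s)} ∩ Θ ⁻¹' Ioc s (2 * s)) := measureReal_mono fun ω hω =>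
        ⟨div_lt_of_lt_mul_of_le (hs0.trans hω.2.1.le) hω.2.2 hx hω.1, hω.2⟩
    _ ≤ (1 + e) * ((∫ ω in Θ ⁻¹' Ioc s (2 * s), h (Θ ω) ∂μ) * tail μ X (x / (2 * s))) :=
        hkey _ hy₀ _ measurableSet_Ioc
    _ ≤ (1 + e) * ((∫ ω in Θ ⁻¹' Ioc s (2 * s), h (Θ ω) ∂μ)
          * ((2 * (2 * s)) ^ ρ * tail μ X x)) := by
        gcongr
        exact hpot _ _ hs hx₁
    _ = (1 + e) * 4 ^ ρ * (s ^ ρ * ∫ ω in Θ ⁻¹' Ioc s (2 * s), h (Θ ω) ∂μ) * tail μ X x := by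
        rw [show 2 * (2 * s) = 4 * s by ring, Real.mul_rpow (by norm_num) hs0]; ring
    _ ≤ (1 + e) * 4 ^ ρ * (∫ ω in Θ ⁻¹' Ioc s (2 * s), Θ ω ^ ρ * h (Θ ω) ∂μ) * tail μ X x := by
        gcongr
        · exact tail_nonneg μ X x
        · exact mul_setIntegral_le_setIntegral_rpow_mul hΘm hh hIh hρ hIρ hs0

lemma pr_inter_preimage_Ioc_dyadic_le [IsFiniteMeasure μ] (hXm : Measurable X)
    (hΘm : Measurable Θ) (hh : ∀ ω, 0 ≤ h (Θ ω)) (hIh : Integrable (fun ω => h (Θ ω)) μ)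
    (hIρ : Integrable (fun ω => Θ ω ^ ρ * h (Θ ω)) μ) (hρ : 0 ≤ ρ) {e y₀ x₁ : ℝ} (he : 0 < e)
    (hkey : ∀ y ≥ y₀, ∀ S : Set ℝ, MeasurableSet S →
      pr μ ({ω | X ω > y} ∩ Θ ⁻¹' S) ≤ (1 + e) * ((∫ ω in Θ ⁻¹' S, h (Θ ω) ∂μ) * tail μ X y))
    (hpot : ∀ s x, 1 ≤ s → x₁ ≤ x / s → tail μ X (x / s) ≤ (2 * s) ^ ρ * tail μ X x)
    {b x : ℝ} (hb : 1 ≤ b) (hx : 0 < x) (J : ℕ) (hy₀ : y₀ ≤ x / (2 * (b * 2 ^ J)))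
    (hx₁ : x₁ ≤ x / (2 * (b * 2 ^ J))) :
    pr μ ({ω | Θ ω * X ω > x} ∩ Θ ⁻¹' Ioc b (b * 2 ^ (J + 1)))
      ≤ (1 + e) * 4 ^ ρ * (∫ ω in Θ ⁻¹' Ioc b (b * 2 ^ (J + 1)), Θ ω ^ ρ * h (Θ ω) ∂μ)
        * tail μ X x := by
  have hb0 : 0 < b := one_pos.trans_le hb
  have hgrid : Monotone fun j : ℕ => b * 2 ^ j := fun i j hij =>
    mul_le_mul_of_nonneg_left (pow_le_pow_right₀ one_le_two hij) hb0.le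
  have hE : MeasurableSet {ω | Θ ω * X ω > x} := measurableSet_lt measurable_const (hΘm.mul hXm)
  have hP := sum_Ioc_eq_of_additive (m := fun S => pr μ ({ω | Θ ω * X ω > x} ∩ Θ ⁻¹' S))
    (fun _ _ _ => pr_inter_preimage_Ioc_add hE hΘm) hgrid (J + 1)
  have hI := sum_Ioc_eq_of_additive (m := fun S => ∫ ω in Θ ⁻¹' S, Θ ω ^ ρ * h (Θ ω) ∂μ)
    (fun _ _ _ => setIntegral_preimage_Ioc_add hIρ hΘm) hgrid (J + 1)
  simp only [pow_zero, mul_one] at hP hI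
  rw [← hP, ← hI, Finset.mul_sum, Finset.sum_mul]
  refine Finset.sum_le_sum fun j hj => ?_
  have hjJ : x / (2 * (b * 2 ^ J)) ≤ x / (2 * (b * 2 ^ j)) :=
    div_le_div_of_nonneg_left hx.le (by positivity) (by
      gcongr
      · exact one_le_two
      · exact Nat.lt_succ_iff.1 (Finset.mem_range.1 hj))
  rw [pow_succ, ← mul_assoc, mul_comm _ 2]
  exact pr_inter_preimage_Ioc_two_mul_le hΘm hh hIh hIρ hρ he hkey hpot
    (by nlinarith [one_le_pow₀ (M₀ := ℝ) one_le_two (n := j)]) hx (hy₀.trans hjJ) (hx₁.trans hjJ)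

theorem TailFactorizes.exists_pr_inter_preimage_Ioc_div_le [IsFiniteMeasure μ]
    (hfac : TailFactorizes μ X Θ h) (hR : RegVar μ X α) (hF : ∀ x, 0 ≤ x → 0 < tail μ X x)
    (hXm : Measurable X) (hΘm : Measurable Θ) (hh : ∀ ω, 0 ≤ h (Θ ω))
    (hIh : Integrable (fun ω => h (Θ ω)) μ) (hIρ : Integrable (fun ω => Θ ω ^ ρ * h (Θ ω)) μ)
    (hαρ : α < ρ) (hρ : 0 ≤ ρ) {e : ℝ} (he : 0 < e) :
    ∃ K > 0, ∀ b ≥ 1, ∀ x > 0, pr μ ({ω | Θ ω * X ω > x} ∩ Θ ⁻¹' Ioc b (x / K))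
      ≤ (1 + e) * 4 ^ ρ * (∫ ω in Θ ⁻¹' Ioi b, Θ ω ^ ρ * h (Θ ω) ∂μ) * tail μ X x := by
  obtain ⟨y₀, hy₀⟩ := eventually_atTop.1 (hfac e he)
  obtain ⟨x₁, hx₁, hpot⟩ := hR.exists_tail_div_le hF hαρ hρ
  set M := max y₀ x₁
  refine ⟨2 * (M + 1), by positivity, fun b hb x hx => ?_⟩
  have hb0 : 0 < b := one_pos.trans_le hb
  have hIoi : 0 ≤ ∫ ω in Θ ⁻¹' Ioi b, Θ ω ^ ρ * h (Θ ω) ∂μ :=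
    setIntegral_nonneg (hΘm measurableSet_Ioi) fun ω (hω : b < Θ ω) =>
      mul_nonneg (Real.rpow_nonneg (hb0.trans hω).le ρ) (hh ω)
  have hF0 := tail_nonneg μ X x
  rcases le_or_gt (x / (2 * (M + 1))) b with hxb | hbx
  · rw [Ioc_eq_empty (not_lt.2 hxb), preimage_empty, inter_empty]
    simp only [pr, measure_empty, ENNReal.toReal_zero]
    positivity
  obtain ⟨J, hJ, hJ₁⟩ := exists_nat_pow_near ((one_le_div hb0).2 hbx.le) one_lt_two
  rw [le_div_iff₀ hb0] at hJ
  rw [div_lt_iff₀ hb0] at hJ₁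
  have hM : M ≤ x / (2 * (b * 2 ^ J)) := by
    rw [le_div_iff₀ (by positivity)]
    rw [le_div_iff₀ (by positivity)] at hJ
    nlinarith [hx₁.trans (le_max_right y₀ x₁)]
  calc pr μ ({ω | Θ ω * X ω > x} ∩ Θ ⁻¹' Ioc b (x / (2 * (M + 1))))
      ≤ pr μ ({ω | Θ ω * X ω > x} ∩ Θ ⁻¹' Ioc b (b * 2 ^ (J + 1))) :=
        measureReal_mono (inter_subset_inter_right _ (preimage_mono
          (Ioc_subset_Ioc_right (by linarith))))
    _ ≤ (1 + e) * 4 ^ ρ * (∫ ω in Θ ⁻¹' Ioc b (b * 2 ^ (J + 1)), Θ ω ^ ρ * h (Θ ω) ∂μ)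
          * tail μ X x :=
        pr_inter_preimage_Ioc_dyadic_le hXm hΘm hh hIh hIρ hρ he
          (fun y hy S hS => (hy₀ y hy S hS).2) hpot hb hx J
          ((le_max_left _ _).trans hM) ((le_max_right _ _).trans hM)
    _ ≤ (1 + e) * 4 ^ ρ * (∫ ω in Θ ⁻¹' Ioi b, Θ ω ^ ρ * h (Θ ω) ∂μ) * tail μ X x := by
        refine mul_le_mul_of_nonneg_right (mul_le_mul_of_nonneg_left ?_ (by positivity)) hF0
        refine setIntegral_mono_set hIρ.integrableOn ?_
          (preimage_mono Ioc_subset_Ioi_self).eventuallyLE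
        exact (ae_restrict_mem (hΘm measurableSet_Ioi)).mono fun ω (hω : b < Θ ω) =>
          mul_nonneg (Real.rpow_nonneg (hb0.trans hω).le ρ) (hh ω)

lemma pr_le_four_regions [IsFiniteMeasure μ] (E : Set Ω) (Θ : Ω → ℝ) (a b c : ℝ) :
    pr μ E ≤ pr μ (E ∩ Θ ⁻¹' Iic a) + pr μ (E ∩ Θ ⁻¹' Ioc a b) + pr μ (E ∩ Θ ⁻¹' Ioc b c)
      + pr μ (Θ ⁻¹' Ioi c) := by
  have hcover : E ⊆ E ∩ Θ ⁻¹' Iic a ∪ E ∩ Θ ⁻¹' Ioc a b ∪ E ∩ Θ ⁻¹' Ioc b c ∪ Θ ⁻¹' Ioi c := by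
    intro ω hω
    simp only [mem_union, mem_inter_iff, mem_preimage, mem_Iic, mem_Ioc, mem_Ioi]
    rcases le_or_gt (Θ ω) a with ha | ha <;> rcases le_or_gt (Θ ω) b with hb | hb <;>
      rcases le_or_gt (Θ ω) c with hc | hc <;> tauto
  refine (measureReal_mono hcover).trans <| (measureReal_union_le _ _).trans (add_le_add ?_ le_rfl)
  exact (measureReal_union_le _ _).trans (add_le_add (measureReal_union_le _ _) le_rfl)

theorem TailFactorizes.eventually_one_sub_mul_tail_le [IsFiniteMeasure μ]
    (hfac : TailFactorizes μ X Θ h) (hR : RegVar μ X α) (hF : ∀ x, 0 ≤ x → 0 < tail μ X x)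
    (hXm : Measurable X) (hΘm : Measurable Θ) (hΘnn : ∀ ω, 0 ≤ Θ ω) (hh : ∀ ω, 0 ≤ h (Θ ω))
    (hIh : Integrable (fun ω => h (Θ ω)) μ) (hIα : Integrable (fun ω => Θ ω ^ α * h (Θ ω)) μ)
    (hIρ : Integrable (fun ω => Θ ω ^ ρ * h (Θ ω)) μ) (hα : 0 < α) (hαρ : α < ρ)
    (hG : ∀ c > (0:ℝ),
      Tendsto (fun x => pr μ {ω | Θ ω > c * x} / tail μ (fun ω => Θ ω * X ω) x) atTop (𝓝 0))
    (hT : ∀ᶠ x in atTop, 0 < tail μ (fun ω => Θ ω * X ω) x) {e : ℝ} (he : 0 < e) (he1 : e ≤ 1) :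
    ∀ᶠ x in atTop, (1 - e) * tail μ (fun ω => Θ ω * X ω) x
      ≤ ((1 + e) ^ 3 * (∫ ω, Θ ω ^ α * h (Θ ω) ∂μ) + 2 * e) * tail μ X x := by
  obtain ⟨K, hK, hlarge⟩ :=
    hfac.exists_pr_inter_preimage_Ioc_div_le hR hF hXm hΘm hh hIh hIρ hαρ (hα.trans hαρ).le he
  set r := (1 + e) ^ α⁻¹
  have hrα : r ^ α = 1 + e := Real.rpow_inv_rpow (by linarith) hα.ne'
  have hr : 1 < r := Real.one_lt_rpow (by linarith) (inv_pos.2 hα)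
  set a := (e / 2) ^ α⁻¹
  have ha : 0 < a := Real.rpow_pos_of_pos (half_pos he) _
  have haα : a ^ α < e := by rw [Real.rpow_inv_rpow (half_pos he).le hα.ne']; linarith
  have hgrid := (tendsto_pow_atTop_atTop_of_one_lt hr).const_mul_atTop ha
  have hsmall : Tendsto (fun n : ℕ => (1 + e) * 4 ^ ρ
      * ∫ ω in Θ ⁻¹' Ioi (a * r ^ n), Θ ω ^ ρ * h (Θ ω) ∂μ) atTop (𝓝 0) := by
    simpa using ((tendsto_setIntegral_preimage_Ioi hIρ hΘm).comp hgrid).const_mul ((1 + e) * 4 ^ ρ)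
  obtain ⟨n, hn₁, hn⟩ :=
    ((hgrid.eventually_ge_atTop 1).and (hsmall.eventually (eventually_le_nhds he))).exists
  have hIC : ∫ ω in Θ ⁻¹' Ioc a (a * r ^ n), Θ ω ^ α * h (Θ ω) ∂μ
      ≤ ∫ ω, Θ ω ^ α * h (Θ ω) ∂μ :=
    setIntegral_le_integral hIα (.of_forall fun ω =>
      mul_nonneg (Real.rpow_nonneg (hΘnn ω) α) (hh ω))
  filter_upwards [hfac.eventually_grid_bounds hR hF hXm hΘm hh hIh hIα hα.le he he1 ha hr.le n,
    hR.eventually_tail_div_le hF ha haα, (hG K⁻¹ (inv_pos.2 hK)).eventually (eventually_lt_nhds he),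
    hT, eventually_gt_atTop 0] with x hmid hlow hGx hTx hx
  have hF0 := tail_nonneg μ X x
  have h₁ : pr μ ({ω | Θ ω * X ω > x} ∩ Θ ⁻¹' Iic a) ≤ e * tail μ X x :=
    (measureReal_mono fun ω hω => div_lt_of_lt_mul_of_le (hΘnn ω) hω.2 hx hω.1).trans hlow
  have h₂ : pr μ ({ω | Θ ω * X ω > x} ∩ Θ ⁻¹' Ioc a (a * r ^ n))
      ≤ (1 + e) ^ 3 * (∫ ω, Θ ω ^ α * h (Θ ω) ∂μ) * tail μ X x := by
    refine hmid.2.trans ?_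
    rw [hrα, ← pow_succ]
    gcongr
  have h₃ : pr μ ({ω | Θ ω * X ω > x} ∩ Θ ⁻¹' Ioc (a * r ^ n) (x / K)) ≤ e * tail μ X x :=
    (hlarge _ hn₁ x hx).trans (mul_le_mul_of_nonneg_right hn hF0)
  have h₄ : pr μ (Θ ⁻¹' Ioi (x / K)) ≤ e * tail μ (fun ω => Θ ω * X ω) x := by
    rw [div_lt_iff₀ hTx] at hGx
    rw [div_eq_inv_mul]
    exact hGx.le
  have hsplit : tail μ (fun ω => Θ ω * X ω) x ≤ _ :=
    pr_le_four_regions (μ := μ) {ω | Θ ω * X ω > x} Θ a (a * r ^ n) (x / K)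
  linarith

theorem TailFactorizes.eventually_lt_mul_tail [IsFiniteMeasure μ] (hfac : TailFactorizes μ X Θ h)
    (hR : RegVar μ X α) (hF : ∀ x, 0 ≤ x → 0 < tail μ X x) (hXm : Measurable X)
    (hΘm : Measurable Θ) (hΘnn : ∀ ω, 0 ≤ Θ ω) (hh : ∀ ω, 0 ≤ h (Θ ω))
    (hIh : Integrable (fun ω => h (Θ ω)) μ) (hIα : Integrable (fun ω => Θ ω ^ α * h (Θ ω)) μ)
    (hIρ : Integrable (fun ω => Θ ω ^ ρ * h (Θ ω)) μ) (hα : 0 < α) (hαρ : α < ρ)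
    (hG : ∀ c > (0:ℝ),
      Tendsto (fun x => pr μ {ω | Θ ω > c * x} / tail μ (fun ω => Θ ω * X ω) x) atTop (𝓝 0))
    (hT : ∀ᶠ x in atTop, 0 < tail μ (fun ω => Θ ω * X ω) x) {c : ℝ}
    (hc : ∫ ω, Θ ω ^ α * h (Θ ω) ∂μ < c) :
    ∀ᶠ x in atTop, tail μ (fun ω => Θ ω * X ω) x < c * tail μ X x := by
  set C := ∫ ω, Θ ω ^ α * h (Θ ω) ∂μ
  have hfactor : Tendsto (fun e : ℝ => ((1 + e) ^ 3 * C + 2 * e) / (1 - e)) (𝓝 0) (𝓝 C) := by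
    have h1 : Tendsto (fun e : ℝ => 1 + e) (𝓝 0) (𝓝 1) := by
      simpa using (tendsto_id (x := 𝓝 (0:ℝ))).const_add 1
    have h2 : Tendsto (fun e : ℝ => 1 - e) (𝓝 0) (𝓝 1) := by
      simpa using (tendsto_id (x := 𝓝 (0:ℝ))).const_sub 1
    have := (((h1.pow 3).mul_const C).add (tendsto_id.const_mul 2)).div h2 one_ne_zero
    simp only [one_pow, one_mul, id, mul_zero, add_zero, div_one] at this
    exact this
  obtain ⟨e, ⟨hce, he1⟩, he⟩ := ((((hfactor.eventually (eventually_lt_nhds hc)).and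
    (eventually_lt_nhds zero_lt_one)).filter_mono nhdsWithin_le_nhds).and
      (self_mem_nhdsWithin (s := Ioi 0))).exists
  filter_upwards [hfac.eventually_one_sub_mul_tail_le hR hF hXm hΘm hΘnn hh hIh hIα hIρ hα hαρ hG
    hT he he1.le, eventually_ge_atTop 0] with x hx hx0
  calc tail μ (fun ω => Θ ω * X ω) x ≤ ((1 + e) ^ 3 * C + 2 * e) / (1 - e) * tail μ X x := by
        rw [div_mul_eq_mul_div, le_div_iff₀' (by linarith)]; exact hx
    _ < c * tail μ X x := mul_lt_mul_of_pos_right hce (hF x hx0)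

lemma tendsto_div_of_eventually_bounds {ι : Type*} {l : Filter ι} {f g : ι → ℝ} {L : ℝ}
    (hg : ∀ᶠ x in l, 0 < g x) (hlo : ∀ c < L, ∀ᶠ x in l, c * g x < f x)
    (hup : ∀ c > L, ∀ᶠ x in l, f x < c * g x) : Tendsto (fun x => f x / g x) l (𝓝 L) :=
  tendsto_order.2 ⟨fun c hc => (hg.and (hlo c hc)).mono fun _ hx => (lt_div_iff₀ hx.1).2 hx.2,
    fun c hc => (hg.and (hup c hc)).mono fun _ hx => (div_lt_iff₀ hx.1).2 hx.2⟩

lemma tendsto_comp_mul_div_of_tendsto_div {f g : ℝ → ℝ} {L b β : ℝ} (hL : L ≠ 0) (hb : 0 < b)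
    (hfg : Tendsto (fun x => f x / g x) atTop (𝓝 L)) (hg : ∀ᶠ x in atTop, g x ≠ 0)
    (hgb : Tendsto (fun x => g (b * x) / g x) atTop (𝓝 β)) :
    Tendsto (fun x => f (b * x) / f x) atTop (𝓝 β) := by
  have hbx := tendsto_id.const_mul_atTop hb
  have hlim := ((hfg.comp hbx).mul hgb).div hfg hL
  rw [mul_div_cancel_left₀ β hL] at hlim
  refine hlim.congr' ?_
  filter_upwards [hg, hbx.eventually hg] with x hx hbx'
  simp only [Pi.div_apply, Function.comp_apply, id] at hbx' ⊢
  rw [div_mul_div_cancel₀ hbx', div_div_div_cancel_right₀ hx]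

/-- Breiman's lemma under dependence: if `F ∈ ℛ₋α`, Assumption A3' holds,
`Ḡ(cx) = o(P[ΘX > x])` for every `c > 0` and `E[Θ^ρ h(Θ)] < ∞` for some `ρ > α`, then
`P[ΘX > x] ~ E[Θ^α h(Θ)] F̄(x)` and the distribution of `ΘX` belongs to `ℛ₋α`. -/
theorem statement_10
    (μ : Measure Ω) [IsProbabilityMeasure μ]
    (X Θ : Ω → ℝ) (α : ℝ) (hα : 0 < α)
    (hXm : Measurable X) (hΘm : Measurable Θ)
    (hF : ∀ x : ℝ, 0 ≤ x → 0 < tail μ X x)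
    (hR : RegVar μ X α)
    (hΘnn : ∀ ω, 0 ≤ Θ ω) (hΘnd : NonDegAtZero μ Θ)
    (h : ℝ → ℝ) (hA3 : A3' μ X Θ h)
    (hG : ∀ c > (0:ℝ),
      Tendsto (fun x => pr μ {ω | Θ ω > c * x} / tail μ (fun ω => Θ ω * X ω) x)
        atTop (nhds 0))
    (ρ : ℝ) (hρ : α < ρ)
    (hmom : Integrable (fun ω => Θ ω ^ ρ * h (Θ ω)) μ) :
    Tendsto (fun x => tail μ (fun ω => Θ ω * X ω) x /
        ((∫ ω, Θ ω ^ α * h (Θ ω) ∂μ) * tail μ X x)) atTop (nhds 1) ∧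
      RegVar μ (fun ω => Θ ω * X ω) α := by
  have hh : ∀ ω, 0 ≤ h (Θ ω) := fun ω => (hA3.1 _ (hΘnn ω)).le
  have hIh := hA3.integrable_comp hΘm hΘnn hF (hα.trans hρ).ne' hmom.1
  have hIα := integrable_rpow_mul_of_le hΘm hΘnn hh hIh hmom hα.le hρ.le
  have hfac := hA3.tailFactorizes hΘm hΘnn hF hIh
  have hC := integral_rpow_mul_pos hΘnn hΘnd (fun ω => hA3.1 _ (hΘnn ω)) hIα
  have hlow := fun c (hc : c < _) =>
    hfac.eventually_mul_tail_lt hR hF hXm hΘm hΘnn hh hIh hIα hα hc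
  have hT : ∀ᶠ x in atTop, 0 < tail μ (fun ω => Θ ω * X ω) x := by simpa using hlow 0 hC
  have hup := fun c (hc : c > _) =>
    hfac.eventually_lt_mul_tail hR hF hXm hΘm hΘnn hh hIh hIα hmom hα hρ hG hT hc
  have hFpos : ∀ᶠ x in atTop, 0 < tail μ X x := (eventually_ge_atTop 0).mono hF
  have hlim := tendsto_div_of_eventually_bounds hFpos hlow hup
  refine ⟨?_, fun b hb => tendsto_comp_mul_div_of_tendsto_div hC.ne' hb hlim
    (hFpos.mono fun _ hx => hx.ne') (hR b hb)⟩
  have hlim' := hlim.div_const (∫ ω, Θ ω ^ α * h (Θ ω) ∂μ)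
  rw [div_self hC.ne'] at hlim'
  exact hlim'.congr fun x => by rw [div_div, mul_comm]

end RWS
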